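/- arXiv:1908.00229 — 2 statements merged into one kernel-verified Lean document; each statement's English description precedes it below -/
import Mathlib

section
/- Let ω ∈ ℝ and let p, q be coprime integers with q ≥ 1 and |qω − p| < 1/q. Then for every M ∈ ℤ and every u ∈ ℝ, #{ n ∈ ℤ : M+1 ≤ n ≤ M+q and ‖nω − u‖ ≤ 1/(2q) } ≤ 3. -/
open MeasureTheory

noncomputable section

/-- The circle `ℝ/ℤ`; for `t : ℝ`, `‖(t : 𝕋)‖` is the distance from `t` to the nearest integer. -/
abbrev 𝕋 : Type := AddCircle (1 : ℝ)

/-!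
Let `rₙ` be the integer nearest to `nω - u` and put `yₙ = q (nω - u - rₙ) + (n - M - 1)(p - qω)`.
For `n` in the set, `|yₙ| ≤ 1/2 + |n - M - 1| |qω - p| < 3/2`. On the other hand
`yₙ - yₙ' = (n - n') p - q (rₙ - rₙ')` is an integer, and it is nonzero for `n ≠ n'`: otherwise
`q ∣ (n - n') p`, hence `q ∣ n - n'` by coprimality, impossible as `0 < |n - n'| < q`.
Points of an interval of length `3` at mutual distance at least `1` number at most `3`.
-/

theorem Set.ncard_le_of_pairwise_one_le_abs_sub {α : Type*} {s : Set α} {f : α → ℝ} {a : ℝ}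
    {N : ℕ} (hmem : ∀ x ∈ s, f x ∈ Set.Ico a (a + N))
    (hsep : s.Pairwise fun x y => 1 ≤ |f x - f y|) : s.ncard ≤ N := by
  have hmaps : ∀ x ∈ s, ⌊f x - a⌋ ∈ Set.Ico (0 : ℤ) N := fun x hx => by
    obtain ⟨hlo, hhi⟩ := hmem x hx
    exact ⟨Int.floor_nonneg.mpr (by linarith), Int.floor_lt.mpr (by push_cast; linarith)⟩
  have hinj : Set.InjOn (fun x => ⌊f x - a⌋) s := fun x hx y hy hxy => by
    by_contra hne
    have hlt := Int.abs_sub_lt_one_of_floor_eq_floor hxy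
    rw [sub_sub_sub_cancel_right] at hlt
    exact (hsep hx hy hne).not_gt hlt
  calc s.ncard ≤ (Set.Ico (0 : ℤ) N).ncard :=
        Set.ncard_le_ncard_of_injOn _ hmaps hinj (Set.finite_Ico _ _)
    _ = N := by rw [← Finset.coe_Ico, Set.ncard_coe_finset, Int.card_Ico]; simp

theorem IsCoprime.mul_ne_mul_of_abs_lt {p q m : ℤ} (hpq : IsCoprime p q) (hm : m ≠ 0)
    (hmq : |m| < q) (R : ℤ) : m * p ≠ q * R := fun h =>
  hm (Int.eq_zero_of_abs_lt_dvd (hpq.symm.dvd_of_dvd_mul_right ⟨R, h⟩) hmq)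

theorem abs_mul_add_mul_lt_three_halves {q x j e : ℝ} (hq : 0 < q) (hx : |x| ≤ 1 / (2 * q))
    (hj : |j| < q) (he : |e| < 1 / q) : |q * x + j * e| < 3 / 2 := by
  have hqx : q * |x| ≤ 1 / 2 := by
    calc q * |x| ≤ q * (1 / (2 * q)) := by gcongr
      _ = 1 / 2 := by field_simp
  have hje : |j| * |e| < 1 := by
    calc |j| * |e| < q * (1 / q) := mul_lt_mul'' hj he (abs_nonneg _) (abs_nonneg _)
      _ = 1 := by field_simp
  calc |q * x + j * e| ≤ q * |x| + |j| * |e| := by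
        rw [← abs_of_pos hq, ← abs_mul, ← abs_mul, abs_of_pos hq]; exact abs_add_le _ _
    _ < 3 / 2 := by linarith

/-- if `p/q` is a good rational approximation of `ω`, then in any window of `q`
consecutive integers `n`, at most `3` of the points `nω - u` are `1/(2q)`-close to `ℤ`. -/
theorem statement_4 (ω : ℝ) (p q : ℤ) (hq : 1 ≤ q) (hpq : IsCoprime p q)
    (happ : |(q : ℝ) * ω - (p : ℝ)| < 1 / (q : ℝ)) (M : ℤ) (u : ℝ) :
    {n : ℤ | M + 1 ≤ n ∧ n ≤ M + q ∧
        ‖(((n : ℝ) * ω - u : ℝ) : 𝕋)‖ ≤ 1 / (2 * (q : ℝ))}.ncard ≤ 3 := by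
  set r : ℤ → ℤ := fun n => round ((n : ℝ) * ω - u)
  set y : ℤ → ℝ := fun n => q * ((n * ω - u) - r n) + ((n - M - 1 : ℤ) : ℝ) * (p - q * ω)
  refine Set.ncard_le_of_pairwise_one_le_abs_sub (f := y) (a := -3 / 2) (N := 3) ?_ ?_
  · rintro n ⟨hlo, hhi, hclose⟩
    rw [UnitAddCircle.norm_eq] at hclose
    have hwindow : |((n - M - 1 : ℤ) : ℝ)| < q := by
      rw [← Int.cast_abs, Int.cast_lt]; exact abs_lt.mpr ⟨by omega, by omega⟩
    have hbound := abs_mul_add_mul_lt_three_halves (by exact_mod_cast hq) hclose hwindow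
      (by rwa [abs_sub_comm])
    rw [abs_lt] at hbound
    constructor <;> push_cast <;> linarith [hbound.1, hbound.2]
  · rintro n ⟨hlo, hhi, -⟩ n' ⟨hlo', hhi', -⟩ hne
    have hdiff : y n - y n' = (((n - n') * p - q * (r n - r n') : ℤ) : ℝ) := by
      simp only [y]; push_cast; ring
    have hne' : (n - n') * p - q * (r n - r n') ≠ 0 := sub_ne_zero.mpr <|
      hpq.mul_ne_mul_of_abs_lt (sub_ne_zero.mpr hne) (abs_lt.mpr ⟨by linarith, by linarith⟩) _
    rw [hdiff, ← Int.cast_abs]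
    exact_mod_cast Int.one_le_abs hne'
end
end

section
/- Let C₀ > 0 and ρ ∈ (0,1). There exists M₀ = M₀(C₀, ρ) such that the following holds for every integer M ≥ M₀. Let H : ℤ × ℤ → ℂ satisfy |H(m,n)| ≤ e^{−|m−n|} for all m ≠ n, let E ∈ ℝ, and let ξ : ℤ → ℂ satisfy |ξ_n| ≤ C₀(1+|n|) for all n and the pointwise eigenvalue equation Σ_{n∈ℤ} H(m,n) ξ_n = E ξ_m for all m ∈ ℤ (the series converging absolutely). Let n₀ ∈ ℤ with |n₀| ≤ e^{M/1000}, and suppose the matrix (H(m,n) − E δ_{mn})_{m,n ∈ [n₀−M, n₀+M]} is invertible with inverse G satisfying |G(m,n)| < e^{M^{1−ρ}} for all m,n ∈ [n₀−M, n₀+M] and additionally |G(m,n)| < e^{M^{1−ρ} − |m−n|/100} when |m−n| > M/10. Then |ξ_{n₀}| < e^{−M/200}. -/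
/-!
Restricting the eigenvalue equation to `J = [n₀ - M, n₀ + M]` gives `(H - E)_J ξ_J = b` with the
boundary term `b_m = -∑_{n ∉ J} H(m,n) ξ_n`, hence `ξ_{n₀} = ∑_{m ∈ J} G(n₀,m) b_m`. The decay
`e^{-|m-n|}` of `H` beats the linear growth of `ξ`, so
`|b_m| ≲ C₀ (1 + |n₀| + M) e^{-(M - |m - n₀|)/4}`. For `m` near `n₀` this boundary decay absorbs the
crude bound `e^{M^{1-ρ}}` on `G`; for `m` far from `n₀` the decay `e^{-|m-n₀|/100}` of `G` makes up
the difference. Every term is thus at most `(1 + |n₀| + M) e^{M^{1-ρ} - M/100}` up to a constant,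
and since `|n₀| ≤ e^{M/1000}` and `M^{1-ρ} = o(M)` the `2M + 1` terms sum to less than
`e^{-M/200}` once `M` is large.
-/

open MeasureTheory

noncomputable section

/-- Restriction of an infinite matrix (a kernel on `ℤ`) to a finite set of sites. -/
def subMat (A : ℤ → ℤ → ℂ) (I : Finset ℤ) : Matrix I I ℂ := fun m n => A (m : ℤ) (n : ℤ)

/-- The kernel `H - E δ`. -/
def kerE (H : ℤ → ℤ → ℂ) (E : ℝ) : ℤ → ℤ → ℂ :=
  fun m n => H m n - if m = n then (E : ℂ) else 0

open Filter Real
open scoped Matrix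

lemma summable_exp_neg_mul_abs {c : ℝ} (hc : 0 < c) :
    Summable fun k : ℤ => exp (-c * |(k : ℝ)|) := by
  have h : Summable fun n : ℕ => exp (n * -c) := summable_exp_nat_mul_iff.mpr (by linarith)
  refine summable_int_iff_summable_nat_and_neg.mpr ⟨h.congr fun n => ?_, h.congr fun n => ?_⟩ <;>
    simp [mul_comm]

lemma one_add_le_two_mul_exp_half (t : ℝ) : 1 + t ≤ 2 * exp (t / 2) := by
  linarith [add_one_le_exp (t / 2)]

section Kernel

variable {H : ℤ → ℤ → ℂ} {ξ : ℤ → ℂ} {C₀ : ℝ}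

lemma nonneg_of_norm_le_mul_one_add_abs (hξ : ∀ n : ℤ, ‖ξ n‖ ≤ C₀ * (1 + |(n : ℝ)|)) :
    0 ≤ C₀ := by
  simpa using (norm_nonneg _).trans (hξ 0)

lemma norm_kernel_mul_le (hH : ∀ m n : ℤ, m ≠ n → ‖H m n‖ ≤ exp (-|(m : ℝ) - (n : ℝ)|))
    (hξ : ∀ n : ℤ, ‖ξ n‖ ≤ C₀ * (1 + |(n : ℝ)|)) {m n : ℤ} (hmn : m ≠ n) :
    ‖H m n * ξ n‖ ≤ 2 * C₀ * (1 + |(m : ℝ)|) * exp (-|(m : ℝ) - n| / 2) := by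
  set t := |(m : ℝ) - n|
  have hC₀ := nonneg_of_norm_le_mul_one_add_abs hξ
  have hn : 1 + |(n : ℝ)| ≤ (1 + |(m : ℝ)|) * (1 + t) := by
    have hnm : |(n : ℝ) - m| = t := abs_sub_comm _ _
    have : |(n : ℝ)| ≤ |(m : ℝ)| + t := by linarith [abs_sub_abs_le_abs_sub (n : ℝ) m]
    nlinarith [abs_nonneg (m : ℝ), abs_nonneg ((m : ℝ) - n)]
  have hsplit : exp (-t) * exp (t / 2) = exp (-t / 2) := by rw [← exp_add]; ring_nf
  rw [norm_mul]
  calc ‖H m n‖ * ‖ξ n‖ ≤ exp (-t) * (C₀ * ((1 + |(m : ℝ)|) * (1 + t))) := by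
        gcongr
        · exact hH m n hmn
        · exact (hξ n).trans (by gcongr)
    _ ≤ exp (-t) * (C₀ * ((1 + |(m : ℝ)|) * (2 * exp (t / 2)))) := by
        gcongr; exact one_add_le_two_mul_exp_half t
    _ = 2 * C₀ * (1 + |(m : ℝ)|) * exp (-t / 2) := by rw [← hsplit]; ring

lemma norm_tsum_kernel_mul_le (hH : ∀ m n : ℤ, m ≠ n → ‖H m n‖ ≤ exp (-|(m : ℝ) - (n : ℝ)|))
    (hξ : ∀ n : ℤ, ‖ξ n‖ ≤ C₀ * (1 + |(n : ℝ)|)) {m : ℤ} {s : Set ℤ} (hm : m ∉ s) {r : ℝ}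
    (hr : ∀ n ∈ s, r ≤ |(m : ℝ) - n|) :
    ‖∑' n : s, H m n * ξ n‖ ≤
      2 * C₀ * (1 + |(m : ℝ)|) * (∑' k : ℤ, exp (-(1 / 4) * |(k : ℝ)|)) * exp (-r / 4) := by
  have hC₀ := nonneg_of_norm_le_mul_one_add_abs hξ
  set c := 2 * C₀ * (1 + |(m : ℝ)|) * exp (-r / 4)
  set g : ℤ → ℝ := fun n => c * exp (-(1 / 4) * |(m : ℝ) - n|)
  have hg : Summable g := by
    refine .mul_left c ((Equiv.subLeft m).summable_iff.mp ?_)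
    simpa [Function.comp_def] using summable_exp_neg_mul_abs (c := 1 / 4) (by norm_num)
  have hbound : ∀ n : s, ‖H m n * ξ n‖ ≤ g n := by
    rintro ⟨n, hn⟩
    refine (norm_kernel_mul_le hH hξ fun h : m = n => hm (h ▸ hn)).trans ?_
    have hdecay : exp (-|(m : ℝ) - n| / 2) ≤ exp (-r / 4) * exp (-(1 / 4) * |(m : ℝ) - n|) := by
      rw [← exp_add]; gcongr; linarith [hr n hn]
    simp only [g, c, mul_assoc]
    gcongr
  calc ‖∑' n : s, H m n * ξ n‖ ≤ ∑' n : s, g n :=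
        tsum_of_norm_bounded (hg.subtype s).hasSum hbound
    _ ≤ ∑' n, g n := hg.tsum_subtype_le g s (fun n => by positivity)
    _ = c * ∑' k : ℤ, exp (-(1 / 4) * |(k : ℝ)|) := by
        rw [tsum_mul_left, ← (Equiv.subLeft m).tsum_eq]; simp
    _ = _ := by ring

end Kernel

section FiniteVolume

variable {H : ℤ → ℤ → ℂ} {E : ℝ} {ξ : ℤ → ℂ}

lemma subMat_kerE_mulVec
    (heig : ∀ m : ℤ, Summable (fun n => H m n * ξ n) ∧ ∑' n : ℤ, H m n * ξ n = (E : ℂ) * ξ m)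
    (J : Finset ℤ) :
    subMat (kerE H E) J *ᵥ (fun m : J => ξ m) =
      fun m : J => -∑' n : {n // n ∉ J}, H m n * ξ n := by
  ext ⟨m, hm⟩
  have hsplit := (heig m).1.sum_add_tsum_subtype_compl J
  rw [(heig m).2] at hsplit
  simp only [Matrix.mulVec, dotProduct, subMat, kerE, sub_mul, ite_mul, zero_mul,
    Finset.sum_sub_distrib]
  rw [Finset.sum_coe_sort J (fun n => H m n * ξ n),
    Finset.sum_coe_sort J (fun n => if m = n then (E : ℂ) * ξ n else 0),
    Finset.sum_ite_eq J m, if_pos hm]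
  linear_combination hsplit

lemma eq_sum_inv_mul_neg_tsum_compl
    (heig : ∀ m : ℤ, Summable (fun n => H m n * ξ n) ∧ ∑' n : ℤ, H m n * ξ n = (E : ℂ) * ξ m)
    {J : Finset ℤ} (hA : IsUnit (subMat (kerE H E) J)) (m₀ : J) :
    ξ m₀ = ∑ m : J, (subMat (kerE H E) J)⁻¹ m₀ m * -∑' n : {n // n ∉ J}, H m n * ξ n := by
  have hdet := (Matrix.isUnit_iff_isUnit_det _).mp hA
  have h := congrFun (congrArg ((subMat (kerE H E) J)⁻¹ *ᵥ ·) (subMat_kerE_mulVec heig J)) m₀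
  rwa [Matrix.mulVec_mulVec, Matrix.nonsing_inv_mul _ hdet, Matrix.one_mulVec] at h

end FiniteVolume

lemma abs_sub_le_of_mem_Icc {c m : ℤ} {M : ℕ} (hm : m ∈ Finset.Icc (c - M) (c + M)) :
    |(c : ℝ) - m| ≤ M := by
  rw [Finset.mem_Icc] at hm
  have : |c - m| ≤ M := abs_le.mpr ⟨by omega, by omega⟩
  exact_mod_cast this

lemma sub_abs_le_abs_sub_of_mem_Icc {c m n : ℤ} {M : ℕ} (hm : m ∈ Finset.Icc (c - M) (c + M))
    (hn : n ∉ Finset.Icc (c - M) (c + M)) : (M : ℝ) - |(c : ℝ) - m| ≤ |(m : ℝ) - n| := by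
  rw [Finset.mem_Icc] at hm hn
  have : (M : ℤ) - |c - m| ≤ |m - n| := by
    rcases abs_cases (c - m) with ⟨h1, _⟩ | ⟨h1, _⟩ <;>
      rcases abs_cases (m - n) with ⟨h2, _⟩ | ⟨h2, _⟩ <;> omega
  exact_mod_cast this

lemma mul_exp_le_of_far_decay {g d M X : ℝ} (hdM : d ≤ M) (hg : g ≤ exp X)
    (hfar : M / 10 < d → g ≤ exp (X - d / 100)) :
    g * exp (-(M - d) / 4) ≤ exp (X - M / 100) := by
  by_cases h : M / 10 < d
  · calc g * exp (-(M - d) / 4) ≤ exp (X - d / 100) * exp (-(M - d) / 4) := by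
          gcongr; exact hfar h
      _ ≤ exp (X - M / 100) := by rw [← exp_add]; gcongr; linarith
  · calc g * exp (-(M - d) / 4) ≤ exp X * exp (-(M - d) / 4) := by gcongr
      _ ≤ exp (X - M / 100) := by rw [← exp_add]; gcongr; linarith

lemma norm_le_of_green_bounds {H : ℤ → ℤ → ℂ} {E : ℝ} {ξ : ℤ → ℂ} {C₀ X : ℝ}
    (hH : ∀ m n : ℤ, m ≠ n → ‖H m n‖ ≤ exp (-|(m : ℝ) - (n : ℝ)|))
    (hξ : ∀ n : ℤ, ‖ξ n‖ ≤ C₀ * (1 + |(n : ℝ)|))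
    (heig : ∀ m : ℤ, Summable (fun n => H m n * ξ n) ∧ ∑' n : ℤ, H m n * ξ n = (E : ℂ) * ξ m)
    (n₀ : ℤ) (M : ℕ) (hA : IsUnit (subMat (kerE H E) (Finset.Icc (n₀ - M) (n₀ + M))))
    (hG : ∀ m n : (Finset.Icc (n₀ - (M : ℤ)) (n₀ + (M : ℤ)) : Finset ℤ),
      ‖(subMat (kerE H E) (Finset.Icc (n₀ - M) (n₀ + M)))⁻¹ m n‖ ≤ exp X)
    (hGfar : ∀ m n : (Finset.Icc (n₀ - (M : ℤ)) (n₀ + (M : ℤ)) : Finset ℤ),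
      (M : ℝ) / 10 < |((m : ℤ) : ℝ) - ((n : ℤ) : ℝ)| →
      ‖(subMat (kerE H E) (Finset.Icc (n₀ - M) (n₀ + M)))⁻¹ m n‖
        ≤ exp (X - |((m : ℤ) : ℝ) - ((n : ℤ) : ℝ)| / 100)) :
    ‖ξ n₀‖ ≤ (2 * M + 1) *
      (2 * C₀ * (∑' k : ℤ, exp (-(1 / 4) * |(k : ℝ)|)) * (1 + |(n₀ : ℝ)| + M)) *
        exp (X - M / 100) := by
  set J := Finset.Icc (n₀ - (M : ℤ)) (n₀ + M)
  set G := (subMat (kerE H E) J)⁻¹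
  set K := 2 * C₀ * (∑' k : ℤ, exp (-(1 / 4) * |(k : ℝ)|)) * (1 + |(n₀ : ℝ)| + M)
  have hn₀ : n₀ ∈ J := Finset.mem_Icc.mpr ⟨by omega, by omega⟩
  have hC₀ := nonneg_of_norm_le_mul_one_add_abs hξ
  have hterm (m : J) :
      ‖G ⟨n₀, hn₀⟩ m * -∑' n : {n // n ∉ J}, H m n * ξ n‖ ≤ K * exp (X - M / 100) := by
    obtain ⟨m, hm⟩ := m
    have hd := abs_sub_le_of_mem_Icc hm
    have hm' : |(m : ℝ)| ≤ |(n₀ : ℝ)| + M := by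
      linarith [abs_sub_abs_le_abs_sub (m : ℝ) n₀, abs_sub_comm (m : ℝ) n₀]
    have hb : ‖∑' n : {n // n ∉ J}, H m n * ξ n‖ ≤ K * exp (-(M - |(n₀ : ℝ) - m|) / 4) :=
      calc _ ≤ _ := norm_tsum_kernel_mul_le hH hξ (s := {n | n ∉ J}) (not_not.mpr hm)
            fun n hn => sub_abs_le_abs_sub_of_mem_Icc hm hn
        _ = 2 * C₀ * (∑' k : ℤ, exp (-(1 / 4) * |(k : ℝ)|)) * (1 + |(m : ℝ)|) *
              exp (-(M - |(n₀ : ℝ) - m|) / 4) := by ring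
        _ ≤ _ := by gcongr; exact mul_le_mul_of_nonneg_left (by linarith) (by positivity)
    have hGm := mul_exp_le_of_far_decay hd (hG ⟨n₀, hn₀⟩ ⟨m, hm⟩) (hGfar ⟨n₀, hn₀⟩ ⟨m, hm⟩)
    rw [norm_mul, norm_neg]
    calc ‖G ⟨n₀, hn₀⟩ ⟨m, hm⟩‖ * ‖∑' n : {n // n ∉ J}, H m n * ξ n‖
        ≤ ‖G ⟨n₀, hn₀⟩ ⟨m, hm⟩‖ * (K * exp (-(M - |(n₀ : ℝ) - m|) / 4)) := by gcongr
      _ = K * (‖G ⟨n₀, hn₀⟩ ⟨m, hm⟩‖ * exp (-(M - |(n₀ : ℝ) - m|) / 4)) := by ring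
      _ ≤ K * exp (X - M / 100) := by gcongr
  have hcard : (Fintype.card J : ℝ) = 2 * M + 1 := by
    rw [Fintype.card_coe, Int.card_Icc, show n₀ + M + 1 - (n₀ - M) = ((2 * M + 1 : ℕ) : ℤ) by
      push_cast; ring, Int.toNat_natCast]
    push_cast; ring
  calc ‖ξ n₀‖ = ‖∑ m : J, G ⟨n₀, hn₀⟩ m * -∑' n : {n // n ∉ J}, H m n * ξ n‖ := by
        rw [← eq_sum_inv_mul_neg_tsum_compl heig hA ⟨n₀, hn₀⟩]
    _ ≤ ∑ m : J, K * exp (X - M / 100) := norm_sum_le_of_le _ fun m _ => hterm m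
    _ = _ := by rw [Finset.sum_const, Finset.card_univ, nsmul_eq_mul, hcard]; ring

lemma eventually_affine_le_exp (a b : ℝ) {c : ℝ} (hc : 0 < c) :
    ∀ᶠ x in atTop, a * x + b ≤ exp (x / c) := by
  have h := ((isLittleO_pow_exp_pos_mul_atTop 1 (inv_pos.mpr hc)).const_mul_left a).add
    ((isLittleO_pow_exp_pos_mul_atTop 0 (inv_pos.mpr hc)).const_mul_left b)
  filter_upwards [h.bound one_pos] with x hx
  simp only [pow_one, pow_zero, mul_one, one_mul, norm_of_nonneg (exp_pos _).le] at hx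
  rw [div_eq_inv_mul]
  exact (le_abs_self _).trans hx

lemma eventually_rpow_one_sub_le_mul {ρ c : ℝ} (hρ : 0 < ρ) (hc : 0 < c) :
    ∀ᶠ x : ℝ in atTop, x ^ (1 - ρ) ≤ c * x := by
  filter_upwards [(tendsto_rpow_atTop hρ).eventually_ge_atTop c⁻¹, eventually_gt_atTop 0]
    with x hxρ hx
  have hsplit : x ^ (1 - ρ) * x ^ ρ = x := by rw [← rpow_add hx]; simp
  have hpos : 0 ≤ x ^ (1 - ρ) := rpow_nonneg hx.le _
  calc x ^ (1 - ρ) = c * (x ^ (1 - ρ) * c⁻¹) := by field_simp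
    _ ≤ c * (x ^ (1 - ρ) * x ^ ρ) := by gcongr
    _ = c * x := by rw [hsplit]

lemma eventually_mul_exp_lt_exp_neg {C ρ : ℝ} (hC : 0 ≤ C) (hρ : 0 < ρ) :
    ∀ᶠ x : ℝ in atTop, ∀ a : ℝ, |a| ≤ exp (x / 1000) →
      (2 * x + 1) * (C * (1 + |a| + x)) * exp (x ^ (1 - ρ) - x / 100) < exp (-x / 200) := by
  filter_upwards [eventually_affine_le_exp 2 1 (c := 1000) (by norm_num),
    eventually_affine_le_exp 0 (2 * C) (c := 2000) (by norm_num),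
    eventually_rpow_one_sub_le_mul hρ (c := 1 / 1000) (by norm_num), eventually_gt_atTop 0]
    with x hvol hC' hrpow hx a ha
  have hgrowth : C * (1 + |a| + x) ≤ exp (x / 2000) * exp (x / 1000) := by
    nlinarith [exp_pos (x / 1000)]
  calc (2 * x + 1) * (C * (1 + |a| + x)) * exp (x ^ (1 - ρ) - x / 100)
      ≤ exp (x / 1000) * (exp (x / 2000) * exp (x / 1000)) * exp (x / 1000 - x / 100) := by
        gcongr
        linarith
    _ = exp (-(13 / 2000) * x) := by rw [← exp_add, ← exp_add, ← exp_add]; ring_nf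
    _ < exp (-x / 200) := exp_lt_exp.mpr (by linarith)

theorem statement_18_general (C₀ ρ : ℝ) (hC₀ : 0 < C₀) (hρ : 0 < ρ) :
    ∃ M₀ : ℕ, ∀ M : ℕ, M₀ ≤ M →
      ∀ H : ℤ → ℤ → ℂ,
        (∀ m n : ℤ, m ≠ n → ‖H m n‖ ≤ Real.exp (-|(m : ℝ) - (n : ℝ)|)) →
      ∀ E : ℝ, ∀ ξ : ℤ → ℂ,
        (∀ n : ℤ, ‖ξ n‖ ≤ C₀ * (1 + |(n : ℝ)|)) →
        (∀ m : ℤ, Summable (fun n => ‖H m n * ξ n‖) ∧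
          ∑' n : ℤ, H m n * ξ n = (E : ℂ) * ξ m) →
      ∀ n₀ : ℤ, (|n₀| : ℝ) ≤ Real.exp ((M : ℝ) / 1000) →
        IsUnit (subMat (kerE H E) (Finset.Icc (n₀ - M) (n₀ + M))) →
        (∀ m n : (Finset.Icc (n₀ - (M : ℤ)) (n₀ + (M : ℤ)) : Finset ℤ),
          ‖(subMat (kerE H E) (Finset.Icc (n₀ - M) (n₀ + M)))⁻¹ m n‖
            < Real.exp ((M : ℝ) ^ (1 - ρ))) →
        (∀ m n : (Finset.Icc (n₀ - (M : ℤ)) (n₀ + (M : ℤ)) : Finset ℤ),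
          (M : ℝ) / 10 < |((m : ℤ) : ℝ) - ((n : ℤ) : ℝ)| →
          ‖(subMat (kerE H E) (Finset.Icc (n₀ - M) (n₀ + M)))⁻¹ m n‖
            < Real.exp ((M : ℝ) ^ (1 - ρ) - |((m : ℤ) : ℝ) - ((n : ℤ) : ℝ)| / 100)) →
        ‖ξ n₀‖ < Real.exp (-(M : ℝ) / 200) := by
  obtain ⟨M₀, hM₀⟩ := eventually_atTop.mp <| tendsto_natCast_atTop_atTop.eventually <|
    eventually_mul_exp_lt_exp_neg (C := 2 * C₀ * ∑' k : ℤ, exp (-(1 / 4) * |(k : ℝ)|))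
      (by positivity) hρ
  refine ⟨M₀, fun M hM H hH E ξ hξ heig n₀ hn₀ hA hG hGfar => ?_⟩
  have heig' (m : ℤ) : Summable (fun n => H m n * ξ n) ∧ ∑' n, H m n * ξ n = (E : ℂ) * ξ m :=
    ⟨(heig m).1.of_norm, (heig m).2⟩
  refine (norm_le_of_green_bounds hH hξ heig' n₀ M hA (fun m n => (hG m n).le)
    (fun m n h => (hGfar m n h).le)).trans_lt ?_
  exact hM₀ M hM n₀ hn₀

/-- a polynomially bounded generalized eigenfunction is small at a site `n₀`
(with `|n₀| ≤ e^{M/1000}`) around which the Green function on `[n₀ - M, n₀ + M]` has good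
bounds: `|ξ_{n₀}| < e^{-M/200}`. -/
theorem statement_18 (C₀ ρ : ℝ) (hC₀ : 0 < C₀) (hρ : 0 < ρ) (hρ' : ρ < 1) :
    ∃ M₀ : ℕ, ∀ M : ℕ, M₀ ≤ M →
      ∀ H : ℤ → ℤ → ℂ,
        (∀ m n : ℤ, m ≠ n → ‖H m n‖ ≤ Real.exp (-|(m : ℝ) - (n : ℝ)|)) →
      ∀ E : ℝ, ∀ ξ : ℤ → ℂ,
        (∀ n : ℤ, ‖ξ n‖ ≤ C₀ * (1 + |(n : ℝ)|)) →
        (∀ m : ℤ, Summable (fun n => ‖H m n * ξ n‖) ∧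
          ∑' n : ℤ, H m n * ξ n = (E : ℂ) * ξ m) →
      ∀ n₀ : ℤ, (|n₀| : ℝ) ≤ Real.exp ((M : ℝ) / 1000) →
        IsUnit (subMat (kerE H E) (Finset.Icc (n₀ - M) (n₀ + M))) →
        (∀ m n : (Finset.Icc (n₀ - (M : ℤ)) (n₀ + (M : ℤ)) : Finset ℤ),
          ‖(subMat (kerE H E) (Finset.Icc (n₀ - M) (n₀ + M)))⁻¹ m n‖
            < Real.exp ((M : ℝ) ^ (1 - ρ))) →
        (∀ m n : (Finset.Icc (n₀ - (M : ℤ)) (n₀ + (M : ℤ)) : Finset ℤ),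
          (M : ℝ) / 10 < |((m : ℤ) : ℝ) - ((n : ℤ) : ℝ)| →
          ‖(subMat (kerE H E) (Finset.Icc (n₀ - M) (n₀ + M)))⁻¹ m n‖
            < Real.exp ((M : ℝ) ^ (1 - ρ) - |((m : ℤ) : ℝ) - ((n : ℤ) : ℝ)| / 100)) →
        ‖ξ n₀‖ < Real.exp (-(M : ℝ) / 200) :=
  statement_18_general C₀ ρ hC₀ hρ
end
end
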